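/- (Proposition 3(i)) Let ε ∈ (0,1] and let ξ be an intervention with respect to an initial statistics p⁰ on a finite type set Ω closed under threshold reduction, with d_min = min_{w∈Ω} d_w ≥ 1 and α_ε = ε·d_min/⟨p⁰,d⟩. Define z_ε = inf{ z ∈ [0,1] : ψ_{p(ξ)}(z) ≥ 1−ε }. If φ_{p(ξ)}(z) > z for every z ∈ [0, 1−α_ε], then z_ε ≤ 1−α_ε and hence φ_{p(ξ)}(z) > z for every z ∈ [0, z_ε]. -/
import Mathlib


/-- `φ_{k,r}(z) = ∑_{u=r}^{k} (k choose u) z^u (1-z)^{k-u}`. -/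
def phiKR (k r : ℕ) (z : ℝ) : ℝ :=
  ∑ u ∈ Finset.Icc r k, (k.choose u : ℝ) * z ^ u * (1 - z) ^ (k - u)

/-- `ψ_p(z) = ∑_w p_w φ_{k_w, r_w}(z)`. -/
def psiP {Ω : Type*} [Fintype Ω] (k r : Ω → ℕ) (p : Ω → ℝ) (z : ℝ) : ℝ :=
  ∑ w, p w * phiKR (k w) (r w) z

/-- `φ_p(z) = ⟨p,d⟩⁻¹ ∑_w p_w d_w φ_{k_w, r_w}(z)`. -/
noncomputable def phiP {Ω : Type*} [Fintype Ω] (d k r : Ω → ℕ) (p : Ω → ℝ) (z : ℝ) : ℝ :=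
  (∑ w, p w * (d w : ℝ))⁻¹ * ∑ w, p w * (d w : ℝ) * phiKR (k w) (r w) z

/-- The post-intervention statistics `p(ξ)`. -/
def postP {Ω : Type*} [Fintype Ω] [DecidableEq Ω] (down : Ω → ℕ → Ω)
    (r : Ω → ℕ) (ξ : Ω → ℕ → ℝ) : Ω → ℝ :=
  fun w => ∑ w', ∑ η ∈ Finset.range (r w' + 1), if down w' η = w then ξ w' η else 0

lemma phiKR_nonneg (k r : ℕ) {z : ℝ} (h0 : 0 ≤ z) (h1 : z ≤ 1) :
    0 ≤ phiKR k r z := by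
  apply Finset.sum_nonneg
  intro u _
  have h1z : (0:ℝ) ≤ 1 - z := by linarith
  positivity

lemma phiKR_le_one (k r : ℕ) {z : ℝ} (h0 : 0 ≤ z) (h1 : z ≤ 1) :
    phiKR k r z ≤ 1 := by
  have h1z : (0:ℝ) ≤ 1 - z := by linarith
  have key : ∑ u ∈ Finset.range (k+1), (k.choose u : ℝ) * z ^ u * (1 - z) ^ (k - u) = 1 := by
    calc ∑ u ∈ Finset.range (k+1), (k.choose u : ℝ) * z ^ u * (1 - z) ^ (k - u)
        = ∑ u ∈ Finset.range (k+1), z ^ u * (1 - z) ^ (k - u) * (k.choose u : ℝ) :=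
          Finset.sum_congr rfl fun u _ => by ring
      _ = (z + (1 - z)) ^ k := (add_pow z (1 - z) k).symm
      _ = 1 := by norm_num
  calc phiKR k r z ≤ ∑ u ∈ Finset.range (k+1), (k.choose u : ℝ) * z ^ u * (1-z)^(k-u) := by
        apply Finset.sum_le_sum_of_subset_of_nonneg
        · intro u hu
          simp only [Finset.mem_Icc] at hu
          simp only [Finset.mem_range]
          omega
        · intro u _ _; positivity
    _ = 1 := key

lemma postP_sum {Ω : Type*} [Fintype Ω] [DecidableEq Ω] (down : Ω → ℕ → Ω)
    (r : Ω → ℕ) (ξ : Ω → ℕ → ℝ) (p0 : Ω → ℝ)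
    (hξsum : ∀ w, ∑ η ∈ Finset.range (r w + 1), ξ w η = p0 w)
    (f : Ω → ℝ) (hf : ∀ w η, η ≤ r w → f (down w η) = f w) :
    ∑ w, postP down r ξ w * f w = ∑ w, p0 w * f w := by
  unfold postP
  simp only [Finset.sum_mul, ite_mul, zero_mul]
  rw [Finset.sum_comm]
  refine Finset.sum_congr rfl fun w' _ => ?_
  rw [Finset.sum_comm]
  have h : ∀ η ∈ Finset.range (r w' + 1),
      (∑ w, if down w' η = w then ξ w' η * f w else 0) = ξ w' η * f w' := by
    intro η hη
    rw [Finset.sum_ite_eq]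
    simp [hf w' η (Nat.lt_succ_iff.mp (Finset.mem_range.mp hη))]
  rw [Finset.sum_congr rfl h, ← Finset.sum_mul, hξsum]

/-- (Proposition 3(i)) If `φ_{p(ξ)}(z) > z` for every `z ∈ [0, 1−α_ε]`, then
`z_ε = inf { z ∈ [0,1] : ψ_{p(ξ)}(z) ≥ 1−ε }` satisfies `z_ε ≤ 1−α_ε`, and
hence `φ_{p(ξ)}(z) > z` for every `z ∈ [0, z_ε]`. -/
theorem relaxed_constraint_implies_original_constraint
    {Ω : Type*} [Fintype Ω] [Nonempty Ω] [DecidableEq Ω]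
    (d k r : Ω → ℕ) (down : Ω → ℕ → Ω)
    (hd : ∀ w, 1 ≤ d w) (hrk : ∀ w, r w ≤ k w)
    (hinj : Function.Injective fun w => (d w, k w, r w))
    (hdown : ∀ w, ∀ j ≤ r w,
      d (down w j) = d w ∧ k (down w j) = k w ∧ r (down w j) = r w - j)
    (p0 : Ω → ℝ) (hp00 : ∀ w, 0 ≤ p0 w) (hp01 : ∀ w, p0 w ≤ 1)
    (hp0sum : ∑ w, p0 w = 1)
    (ξ : Ω → ℕ → ℝ)
    (hξ0 : ∀ w η, 0 ≤ ξ w η) (hξ1 : ∀ w η, ξ w η ≤ 1)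
    (hξsupp : ∀ w η, r w < η → ξ w η = 0)
    (hξsum : ∀ w, ∑ η ∈ Finset.range (r w + 1), ξ w η = p0 w)
    (ε : ℝ) (hε0 : 0 < ε) (hε1 : ε ≤ 1)
    (dmin : ℕ) (hdmin : dmin = Finset.univ.inf' Finset.univ_nonempty d)
    (α : ℝ) (hα : α = ε * (dmin : ℝ) / (∑ w, p0 w * (d w : ℝ)))
    (hφ : ∀ z ∈ Set.Icc (0 : ℝ) (1 - α), z < phiP d k r (postP down r ξ) z) :
    sInf {z : ℝ | z ∈ Set.Icc (0 : ℝ) 1 ∧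
        1 - ε ≤ psiP k r (postP down r ξ) z} ≤ 1 - α ∧
    ∀ z ∈ Set.Icc (0 : ℝ)
        (sInf {z : ℝ | z ∈ Set.Icc (0 : ℝ) 1 ∧
          1 - ε ≤ psiP k r (postP down r ξ) z}),
      z < phiP d k r (postP down r ξ) z := by
  set q := postP down r ξ with hq
  -- basic facts about q
  have hq0 : ∀ w, 0 ≤ q w := by
    intro w
    apply Finset.sum_nonneg
    intro w' _
    apply Finset.sum_nonneg
    intro η _
    split
    · exact hξ0 w' η
    · exact le_refl 0
  have hqsum : ∑ w, q w = 1 := by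
    have h := postP_sum down r ξ p0 hξsum (fun _ => 1) (fun _ _ _ => rfl)
    simpa [hp0sum] using h
  have hqd : ∑ w, q w * (d w : ℝ) = ∑ w, p0 w * (d w : ℝ) :=
    postP_sum down r ξ p0 hξsum (fun w => (d w : ℝ))
      (fun w η hη => by simp only [(hdown w η hη).1])
  set D := ∑ w, p0 w * (d w : ℝ) with hD
  have hD1 : (1:ℝ) ≤ D := by
    rw [hD, ← hp0sum]
    apply Finset.sum_le_sum
    intro w _
    exact le_mul_of_one_le_right (hp00 w) (by exact_mod_cast hd w)
  have hD0 : (0:ℝ) < D := lt_of_lt_of_le one_pos hD1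
  have hdmin1 : 1 ≤ dmin := by
    rw [hdmin]
    exact Finset.le_inf' _ _ fun w _ => hd w
  have hdminpos : (0:ℝ) < (dmin : ℝ) := by exact_mod_cast hdmin1
  have hdmin_le : ∀ w, (dmin:ℝ) ≤ (d w : ℝ) := by
    intro w
    exact_mod_cast hdmin ▸ Finset.inf'_le d (Finset.mem_univ w)
  have hdminD : (dmin:ℝ) ≤ D := by
    calc (dmin:ℝ) = ∑ w, p0 w * (dmin:ℝ) := by
          rw [← Finset.sum_mul, hp0sum, one_mul]
      _ ≤ D := Finset.sum_le_sum fun w _ =>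
          mul_le_mul_of_nonneg_left (hdmin_le w) (hp00 w)
  have hα0 : 0 < α := by
    rw [hα]
    exact div_pos (mul_pos hε0 hdminpos) hD0
  have hαε : α ≤ ε := by
    rw [hα, div_le_iff₀ hD0]
    nlinarith [mul_le_mul_of_nonneg_left hdminD hε0.le]
  have hz0mem : (1 - α) ∈ Set.Icc (0:ℝ) (1 - α) := ⟨by linarith, le_refl _⟩
  have hz00 : (0:ℝ) ≤ 1 - α := by linarith
  have hz01 : (1:ℝ) - α ≤ 1 := by linarith
  -- the key inequality: psi at 1 - α is at least 1 - ε
  set T := ∑ w, q w * (d w : ℝ) * phiKR (k w) (r w) (1 - α) with hT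
  have hTgt : D * (1 - α) < T := by
    have h := hφ (1 - α) hz0mem
    rw [phiP, hqd, ← hT] at h
    calc D * (1 - α) < D * (D⁻¹ * T) := mul_lt_mul_of_pos_left h hD0
      _ = T := by rw [← mul_assoc, mul_inv_cancel₀ hD0.ne', one_mul]
  have hψ : 1 - ε ≤ psiP k r q (1 - α) := by
    have expand : D - T = ∑ w, q w * (d w:ℝ) * (1 - phiKR (k w) (r w) (1 - α)) := by
      rw [← hqd, hT]
      rw [← Finset.sum_sub_distrib]
      exact Finset.sum_congr rfl fun w _ => by ring
    have expand2 : 1 - psiP k r q (1 - α) =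
        ∑ w, q w * (1 - phiKR (k w) (r w) (1 - α)) := by
      have h1 : 1 - psiP k r q (1 - α)
          = (∑ w, q w) - ∑ w, q w * phiKR (k w) (r w) (1 - α) := by
        rw [hqsum, psiP]
      rw [h1, ← Finset.sum_sub_distrib]
      exact Finset.sum_congr rfl fun w _ => by ring
    have key : (dmin:ℝ) * (1 - psiP k r q (1 - α)) ≤ D - T := by
      rw [expand, expand2, Finset.mul_sum]
      apply Finset.sum_le_sum
      intro w _
      have hle1 : phiKR (k w) (r w) (1 - α) ≤ 1 := phiKR_le_one _ _ hz00 hz01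
      have hdw := hdmin_le w
      have h1φ : (0:ℝ) ≤ 1 - phiKR (k w) (r w) (1 - α) := by linarith
      calc (dmin:ℝ) * (q w * (1 - phiKR (k w) (r w) (1 - α)))
          = q w * (dmin:ℝ) * (1 - phiKR (k w) (r w) (1 - α)) := by ring
        _ ≤ q w * (d w:ℝ) * (1 - phiKR (k w) (r w) (1 - α)) :=
            mul_le_mul_of_nonneg_right
              (mul_le_mul_of_nonneg_left hdw (hq0 w)) h1φ
    have hDα : D - T < ε * (dmin:ℝ) := by
      have : D * α = ε * (dmin:ℝ) := by
        rw [hα]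
        field_simp
      nlinarith
    nlinarith [key.trans_lt hDα]
  have hmem : (1 - α) ∈ {z : ℝ | z ∈ Set.Icc (0 : ℝ) 1 ∧
      1 - ε ≤ psiP k r q z} := ⟨⟨hz00, hz01⟩, hψ⟩
  have hbdd : BddBelow {z : ℝ | z ∈ Set.Icc (0 : ℝ) 1 ∧
      1 - ε ≤ psiP k r q z} := ⟨0, fun x hx => hx.1.1⟩
  have hInf : sInf {z : ℝ | z ∈ Set.Icc (0 : ℝ) 1 ∧
      1 - ε ≤ psiP k r q z} ≤ 1 - α := csInf_le hbdd hmem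
  refine ⟨hInf, fun z hz => ?_⟩
  exact hφ z ⟨hz.1, hz.2.trans hInf⟩
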